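/- arXiv:1102.2637 — 2 statements merged into one kernel-verified Lean document; each statement's English description precedes it below -/
import Mathlib

section
/- Let U = {(η,θ,φ) ∈ ℝ³ : η > 0}, and on U set H₁ = H₂ = (cosh η − cos θ)⁻¹ and H₃ = sinh η·(cosh η − cos θ)⁻¹, with h = H₁H₂H₃ (coordinates u¹ = η, u² = θ, u³ = φ). Let α₁, α₂ be real constants and let φ₁ : (0,∞) → ℝ, φ₂, φ₃ : ℝ → ℝ be C² functions satisfying φ₁''(η) + coth(η)·φ₁'(η) + (1/4 − α₁ − α₂/sinh²η)·φ₁(η) = 0, φ₂'' + α₁φ₂ = 0, and φ₃'' + α₂φ₃ = 0. Then the function ψ(η,θ,φ) = √(cosh η − cos θ)·φ₁(η)φ₂(θ)φ₃(φ) satisfies the Laplace equation ∑_{i=1}^{3} ∂ᵢ((h/Hᵢ²) ∂ᵢψ) = 0 on U. -/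
/-!
Write `D = cosh η - cos θ` and `F = φ₁ φ₂ φ₃`. The weights are `h/H₁² = h/H₂² = sinh η / D` and
`h/H₃² = 1/(D sinh η)`, so each summand is a one-variable weighted second derivative of `√D · F`.
By the product rule, the terms in which `F` is not differentiated add up to `(sinh η/√D) · F/4`
(thanks to `cosh² - sinh² = 1` and `sin² + cos² = 1`), and the rest is
`(sinh η/√D)(F_ηη + coth η F_η + F_θθ + F_φφ / sinh² η)`. The three ODEs make the total vanish.
-/

/-- The partial derivative of `f : ℝ³ → ℝ` in the `i`-th coordinate direction,
taken as a line (directional) derivative. -/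
noncomputable def pd (i : Fin 3) (f : (Fin 3 → ℝ) → ℝ) (x : Fin 3 → ℝ) : ℝ :=
  lineDeriv ℝ f x (Pi.single i 1)

open Filter Topology Real

theorem lineDeriv_single_eq_deriv_update {ι : Type*} [Fintype ι] [DecidableEq ι]
    (f : (ι → ℝ) → ℝ) (x : ι → ℝ) (i : ι) :
    lineDeriv ℝ f x (Pi.single i 1) = deriv (fun t => f (Function.update x i t)) (x i) := by
  have hline : (fun t : ℝ => f (x + t • Pi.single i 1)) =
      fun t => f (Function.update x i (x i + t)) := by
    funext t
    congr 1
    ext j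
    by_cases hj : j = i <;> simp [hj]
  rw [lineDeriv, hline]
  simpa using deriv_comp_const_add (fun t => f (Function.update x i t)) (x i) 0

theorem pd_mul_pd_eq_deriv (i : Fin 3) (w ψ : (Fin 3 → ℝ) → ℝ) (u : Fin 3 → ℝ) :
    pd i (fun v => w v * pd i ψ v) u =
      deriv (fun t => w (Function.update u i t) *
        deriv (fun r => ψ (Function.update u i r)) t) (u i) := by
  simp only [pd, lineDeriv_single_eq_deriv_update, Function.update_idem, Function.update_self]

-- `f'` has to be a derivative of `f` on a neighbourhood of `x`, not only at `x`, so that it can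
-- stand in for `deriv f` when `deriv f` is differentiated again.
def HasSecondDerivAt {𝕜 F : Type*} [NontriviallyNormedField 𝕜] [NormedAddCommGroup F]
    [NormedSpace 𝕜 F] (f f' : 𝕜 → F) (f'' : F) (x : 𝕜) : Prop :=
  (∀ᶠ t in 𝓝 x, HasDerivAt f (f' t) t) ∧ HasDerivAt f' f'' x

section SecondDeriv

variable {𝕜 : Type*} [NontriviallyNormedField 𝕜]

theorem ContDiffOn.hasSecondDerivAt {F : Type*} [NormedAddCommGroup F] [NormedSpace 𝕜 F]
    {f : 𝕜 → F} {s : Set 𝕜} (hf : ContDiffOn 𝕜 2 f s) (hs : IsOpen s) {x : 𝕜} (hx : x ∈ s) :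
    HasSecondDerivAt f (deriv f) (deriv (deriv f) x) x := by
  refine ⟨eventually_of_mem (hs.mem_nhds hx) fun t ht => ?_, ?_⟩
  · exact ((hf.differentiableOn two_ne_zero).differentiableAt (hs.mem_nhds ht)).hasDerivAt
  · have hf' : ContDiffOn 𝕜 1 (deriv f) s := hf.deriv_of_isOpen hs (by norm_num)
    exact ((hf'.differentiableOn one_ne_zero).differentiableAt (hs.mem_nhds hx)).hasDerivAt

variable {f f' : 𝕜 → 𝕜} {f'' x : 𝕜}

theorem hasSecondDerivAt_const (x c : 𝕜) : HasSecondDerivAt (fun _ => c) (fun _ => 0) 0 x :=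
  ⟨Eventually.of_forall fun t => hasDerivAt_const t c, hasDerivAt_const x 0⟩

theorem HasSecondDerivAt.mul_const (hf : HasSecondDerivAt f f' f'' x) (c : 𝕜) :
    HasSecondDerivAt (fun t => f t * c) (fun t => f' t * c) (f'' * c) x :=
  ⟨hf.1.mono fun _ ht => ht.mul_const c, hf.2.mul_const c⟩

theorem HasSecondDerivAt.const_mul (hf : HasSecondDerivAt f f' f'' x) (c : 𝕜) :
    HasSecondDerivAt (fun t => c * f t) (fun t => c * f' t) (c * f'') x :=
  ⟨hf.1.mono fun _ ht => ht.const_mul c, hf.2.const_mul c⟩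

theorem hasDerivAt_mul_deriv_mul {w g g' : 𝕜 → 𝕜} {w' g'' : 𝕜} (hw : HasDerivAt w w' x)
    (hg : HasSecondDerivAt g g' g'' x) (hf : HasSecondDerivAt f f' f'' x) :
    HasDerivAt (fun t => w t * deriv (fun r => g r * f r) t)
      (w' * (g' x * f x + g x * f' x) +
        w x * (g'' * f x + 2 * (g' x * f' x) + g x * f'')) x := by
  have hprod : (fun t => w t * deriv (fun r => g r * f r) t) =ᶠ[𝓝 x]
      fun t => w t * (g' t * f t + g t * f' t) := by
    filter_upwards [hg.1, hf.1] with t hgt hft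
    exact congrArg (w t * ·) (hgt.mul hft).deriv
  refine ((hw.mul ((hg.2.mul hf.1.self_of_nhds).add
    (hg.1.self_of_nhds.mul hf.2))).congr_of_eventuallyEq hprod).congr_deriv ?_
  simp only [Pi.add_apply, Pi.mul_apply]
  ring

end SecondDeriv

theorem HasSecondDerivAt.sqrt {f f' : ℝ → ℝ} {f'' x : ℝ} (hf : HasSecondDerivAt f f' f'' x)
    (hx : 0 < f x) :
    HasSecondDerivAt (fun t => √(f t)) (fun t => f' t / (2 * √(f t)))
      (f'' / (2 * √(f x)) - f' x ^ 2 / (4 * √(f x) ^ 3)) x := by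
  have hpos : ∀ᶠ t in 𝓝 x, 0 < f t :=
    continuousAt_const.eventually_lt hf.1.self_of_nhds.continuousAt hx
  refine ⟨?_, ?_⟩
  · filter_upwards [hf.1, hpos] with t ht htpos
    exact ht.sqrt htpos.ne'
  · have hs : 0 < √(f x) := Real.sqrt_pos.mpr hx
    refine (hf.2.div ((hf.1.self_of_nhds.sqrt hx.ne').const_mul 2) (by positivity)).congr_deriv ?_
    field_simp
    ring

theorem hasSecondDerivAt_cosh_sub (c x : ℝ) :
    HasSecondDerivAt (fun t => cosh t - c) sinh (cosh x) x :=
  ⟨Eventually.of_forall fun t => (hasDerivAt_cosh t).sub_const c, hasDerivAt_sinh x⟩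

theorem hasSecondDerivAt_sub_cos (c x : ℝ) :
    HasSecondDerivAt (fun t => c - cos t) sin (cos x) x :=
  ⟨Eventually.of_forall fun t => by simpa using (hasDerivAt_cos t).const_sub c, hasDerivAt_sin x⟩

theorem cosh_sub_cos_pos {a : ℝ} (ha : a ≠ 0) (b : ℝ) : 0 < cosh a - cos b := by
  linarith [one_lt_cosh.mpr ha, cos_le_one b]

section ToroidalTerms

variable {f f' : ℝ → ℝ} {f'' a : ℝ}

theorem hasDerivAt_toroidal_eta_term (ha : a ≠ 0) (b : ℝ) (hf : HasSecondDerivAt f f' f'' a) :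
    HasDerivAt
      (fun t => sinh t / (cosh t - cos b) * deriv (fun r => √(cosh r - cos b) * f r) t)
      (sinh a / √(cosh a - cos b) * (f'' + cosh a / sinh a * f' a +
        (cosh a / (cosh a - cos b) - 3 * sinh a ^ 2 / (4 * (cosh a - cos b) ^ 2)) * f a)) a := by
  have hD := cosh_sub_cos_pos ha b
  have hw := (hasDerivAt_sinh a).div ((hasDerivAt_cosh a).sub_const (cos b)) hD.ne'
  refine (hasDerivAt_mul_deriv_mul (w := fun t => sinh t / (cosh t - cos b)) hw
    ((hasSecondDerivAt_cosh_sub _ a).sqrt hD) hf).congr_deriv ?_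
  have hs2 : √(cosh a - cos b) ^ 2 = cosh a - cos b := Real.sq_sqrt hD.le
  have hs : 0 < √(cosh a - cos b) := Real.sqrt_pos.mpr hD
  have hsh : sinh a ≠ 0 := sinh_ne_zero.mpr ha
  generalize √(cosh a - cos b) = s at hs hs2 ⊢
  rw [← hs2]
  field_simp
  ring

theorem hasDerivAt_toroidal_theta_term (ha : a ≠ 0) (b : ℝ) (hf : HasSecondDerivAt f f' f'' b) :
    HasDerivAt
      (fun t => sinh a / (cosh a - cos t) * deriv (fun r => √(cosh a - cos r) * f r) t)
      (sinh a / √(cosh a - cos b) * (f'' +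
        (cos b / (2 * (cosh a - cos b)) - 3 * sin b ^ 2 / (4 * (cosh a - cos b) ^ 2)) * f b)) b := by
  have hD := cosh_sub_cos_pos ha b
  have hw := (hasDerivAt_const b (sinh a)).div ((hasDerivAt_cos b).const_sub (cosh a)) hD.ne'
  refine (hasDerivAt_mul_deriv_mul (w := fun t => sinh a / (cosh a - cos t)) hw
    ((hasSecondDerivAt_sub_cos _ b).sqrt hD) hf).congr_deriv ?_
  have hs2 : √(cosh a - cos b) ^ 2 = cosh a - cos b := Real.sq_sqrt hD.le
  have hs : 0 < √(cosh a - cos b) := Real.sqrt_pos.mpr hD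
  generalize √(cosh a - cos b) = s at hs hs2 ⊢
  rw [← hs2]
  field_simp
  ring

theorem hasDerivAt_toroidal_phi_term (ha : a ≠ 0) (b c : ℝ) (hf : HasSecondDerivAt f f' f'' c) :
    HasDerivAt
      (fun t => (sinh a * (cosh a - cos b))⁻¹ * deriv (fun r => √(cosh a - cos b) * f r) t)
      (sinh a / √(cosh a - cos b) * (f'' / sinh a ^ 2)) c := by
  have hD := cosh_sub_cos_pos ha b
  refine (hasDerivAt_mul_deriv_mul (hasDerivAt_const c _) (hasSecondDerivAt_const c _)
    hf).congr_deriv ?_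
  have hs2 : √(cosh a - cos b) ^ 2 = cosh a - cos b := Real.sq_sqrt hD.le
  have hs : 0 < √(cosh a - cos b) := Real.sqrt_pos.mpr hD
  have hsh : sinh a ≠ 0 := sinh_ne_zero.mpr ha
  generalize √(cosh a - cos b) = s at hs hs2 ⊢
  rw [← hs2]
  field_simp
  ring

end ToroidalTerms

-- The source of the `1/4` in the equation for `φ₁`.
theorem toroidal_quarter_identity {a : ℝ} (ha : a ≠ 0) (b : ℝ) :
    cosh a / (cosh a - cos b) - 3 * sinh a ^ 2 / (4 * (cosh a - cos b) ^ 2) +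
      (cos b / (2 * (cosh a - cos b)) - 3 * sin b ^ 2 / (4 * (cosh a - cos b) ^ 2)) = 1 / 4 := by
  have hD := (cosh_sub_cos_pos ha b).ne'
  field_simp
  linear_combination 6 * Real.cosh_sq a - 6 * sin_sq_add_cos_sq b

theorem toroidal_metric_weights {H : Fin 3 → (Fin 3 → ℝ) → ℝ} {h : (Fin 3 → ℝ) → ℝ}
    (hH0 : ∀ u, H 0 u = (cosh (u 0) - cos (u 1))⁻¹)
    (hH1 : ∀ u, H 1 u = (cosh (u 0) - cos (u 1))⁻¹)
    (hH2 : ∀ u, H 2 u = sinh (u 0) * (cosh (u 0) - cos (u 1))⁻¹)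
    (hh : ∀ u, h u = H 0 u * H 1 u * H 2 u) (v : Fin 3 → ℝ) :
    h v / H 0 v ^ 2 = sinh (v 0) / (cosh (v 0) - cos (v 1)) ∧
      h v / H 1 v ^ 2 = sinh (v 0) / (cosh (v 0) - cos (v 1)) ∧
      h v / H 2 v ^ 2 = (sinh (v 0) * (cosh (v 0) - cos (v 1)))⁻¹ := by
  rw [hh, hH0, hH1, hH2]
  generalize cosh (v 0) - cos (v 1) = D
  generalize sinh (v 0) = S
  rcases eq_or_ne D 0 with rfl | hD
  · simp
  rcases eq_or_ne S 0 with rfl | hS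
  · simp
  refine ⟨?_, ?_, ?_⟩ <;> field_simp

/-- **R-separability of the toroidal metric in the 3-dimensional Laplace equation.**
With `H₁ = H₂ = (cosh η - cos θ)⁻¹`, `H₃ = sinh η (cosh η - cos θ)⁻¹`, `h = H₁H₂H₃` on
`U = {η > 0}`, every choice of `C²` solutions of
`φ₁'' + coth η φ₁' + (1/4 - α₁ - α₂/sinh²η)φ₁ = 0`, `φ₂'' + α₁φ₂ = 0`,
`φ₃'' + α₂φ₃ = 0` yields a solution `ψ = √(cosh η - cos θ)·φ₁φ₂φ₃` of
`∑ᵢ ∂ᵢ((h/Hᵢ²)∂ᵢψ) = 0` on `U`. -/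
theorem toroidal_R_separability
    (U : Set (Fin 3 → ℝ)) (hU : U = {u | 0 < u 0})
    (H : Fin 3 → (Fin 3 → ℝ) → ℝ)
    (hH0 : ∀ u, H 0 u = (Real.cosh (u 0) - Real.cos (u 1))⁻¹)
    (hH1 : ∀ u, H 1 u = (Real.cosh (u 0) - Real.cos (u 1))⁻¹)
    (hH2 : ∀ u, H 2 u = Real.sinh (u 0) * (Real.cosh (u 0) - Real.cos (u 1))⁻¹)
    (h : (Fin 3 → ℝ) → ℝ) (hh : ∀ u, h u = H 0 u * H 1 u * H 2 u)
    (α1 α2 : ℝ)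
    (φ1 φ2 φ3 : ℝ → ℝ)
    (hφ1 : ContDiffOn ℝ 2 φ1 (Set.Ioi 0)) (hφ2 : ContDiff ℝ 2 φ2)
    (hφ3 : ContDiff ℝ 2 φ3)
    (hode1 : ∀ η ∈ Set.Ioi (0 : ℝ),
      deriv (deriv φ1) η + Real.cosh η / Real.sinh η * deriv φ1 η
        + (1 / 4 - α1 - α2 / Real.sinh η ^ 2) * φ1 η = 0)
    (hode2 : ∀ x : ℝ, deriv (deriv φ2) x + α1 * φ2 x = 0)
    (hode3 : ∀ x : ℝ, deriv (deriv φ3) x + α2 * φ3 x = 0)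
    (ψ : (Fin 3 → ℝ) → ℝ)
    (hψ : ∀ u, ψ u = Real.sqrt (Real.cosh (u 0) - Real.cos (u 1)) *
      (φ1 (u 0) * φ2 (u 1) * φ3 (u 2))) :
    ∀ u ∈ U, ∑ i : Fin 3, pd i (fun v => h v / H i v ^ 2 * pd i ψ v) u = 0 := by
  rintro u hu
  rw [hU, Set.mem_ofPred_eq] at hu
  have hweights := toroidal_metric_weights hH0 hH1 hH2 hh
  simp only [Fin.sum_univ_three, pd_mul_pd_eq_deriv, hweights, hψ, Function.update_apply,
    Fin.reduceEq, ↓reduceIte]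
  have ha : u 0 ≠ 0 := hu.ne'
  have hφ1' := hφ1.hasSecondDerivAt isOpen_Ioi hu
  have hφ2' := hφ2.contDiffOn.hasSecondDerivAt isOpen_univ (Set.mem_univ (u 1))
  have hφ3' := hφ3.contDiffOn.hasSecondDerivAt isOpen_univ (Set.mem_univ (u 2))
  rw [(hasDerivAt_toroidal_eta_term ha _ ((hφ1'.mul_const _).mul_const _)).deriv,
    (hasDerivAt_toroidal_theta_term ha _ ((hφ2'.const_mul _).mul_const _)).deriv,
    (hasDerivAt_toroidal_phi_term ha _ _ (hφ3'.const_mul _)).deriv]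
  linear_combination sinh (u 0) / √(cosh (u 0) - cos (u 1)) *
    (φ2 (u 1) * φ3 (u 2) * hode1 (u 0) hu + φ1 (u 0) * φ3 (u 2) * hode2 (u 1) +
      φ1 (u 0) * φ2 (u 1) / sinh (u 0) ^ 2 * hode3 (u 2) +
      φ1 (u 0) * φ2 (u 1) * φ3 (u 2) * toroidal_quarter_identity ha (u 1))
end

section
/- Let a > b > c > 0 be real constants, P(x) = x(x−a)(x−b)(x−c), and let U ⊆ ℝ³ be a nonempty open set on which λ¹ > λ² > λ³ > 0 and on which for each i the quantity ∏_{j≠i}(λⁱ−λʲ)/P(λⁱ) is positive. On U define W = 1 + √(λ¹λ²λ³/(abc)), Hᵢ² = W⁻²·∏_{j≠i}(λⁱ−λʲ)/P(λⁱ), and h = √(H₁²H₂²H₃²). Let α₁, α₂ be real constants, and for each i let φᵢ be a C² function on an open interval containing the range of λⁱ on U (on which P ≠ 0), satisfying φᵢ''(x) + (P'(x)/(2P(x)))φᵢ'(x) + (1/P(x))[α₁ + α₂x + (3/16)x²]φᵢ(x) = 0. Then the function ψ(λ) = √W·φ₁(λ¹)φ₂(λ²)φ₃(λ³) satisfies the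 Laplace equation ∑_{i=1}^{3} ∂ᵢ((h/Hᵢ²) ∂ᵢψ) = 0 on U. -/
/-!
Along the `i`-th coordinate line, `h/Hᵢ² = |λʲ - λᵏ| √|P(λⁱ)| / (√|P(λʲ)| √|P(λᵏ)| W)` and
`W = 1 + √(κλⁱ)` with `κ` independent of `λⁱ`, so the `i`-th term of the Laplacian is a one-variable
operator in `λⁱ` applied to `√W φᵢ`, times factors that do not depend on `λⁱ`. Differentiating and
using the equation of `φᵢ`, this term becomes a common factor times `(λʲ - λᵏ)(V(λⁱ) - Q(λⁱ))`, where
`Q(x) = α₁ + α₂x + (3/16)x²` and `V` is the potential produced by the factor `√W`. The cyclic sum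
vanishes by a Bôcher-type polynomial identity once `r²abc = λ¹λ²λ³` (`r = √(λ¹λ²λ³/(abc))`) is
used; `3/16` is exactly the coefficient for which the contributions of `V` and of `x²` in `Q` cancel.
-/

open Real Filter Topology Finset Function

theorem prod_erase_zero_fin_three (g : Fin 3 → ℝ) : ∏ j ∈ univ.erase 0, g j = g 1 * g 2 := by
  rw [show univ.erase (0 : Fin 3) = {1, 2} by decide, prod_pair (by decide)]

theorem prod_erase_one_fin_three (g : Fin 3 → ℝ) : ∏ j ∈ univ.erase 1, g j = g 0 * g 2 := by
  rw [show univ.erase (1 : Fin 3) = {0, 2} by decide, prod_pair (by decide)]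

theorem prod_erase_two_fin_three (g : Fin 3 → ℝ) : ∏ j ∈ univ.erase 2, g j = g 0 * g 1 := by
  rw [show univ.erase (2 : Fin 3) = {0, 1} by decide, prod_pair (by decide)]

theorem prod_apply_update {ι : Type*} [Fintype ι] [DecidableEq ι] (f : ι → ℝ → ℝ) (l : ι → ℝ)
    (i : ι) (u : ℝ) : ∏ j, f j (update l i u j) = f i u * ∏ j ∈ univ.erase i, f j (l j) := by
  simp_rw [apply_update f l i u]
  rw [prod_update_of_mem (mem_univ i), sdiff_singleton_eq_erase]

theorem hasDerivAt_quartic {P : ℝ → ℝ} {a b c : ℝ} (hP : ∀ x, P x = x * (x - a) * (x - b) * (x - c))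
    (x : ℝ) : HasDerivAt P ((x - a) * (x - b) * (x - c) + x * (x - b) * (x - c)
      + x * (x - a) * (x - c) + x * (x - a) * (x - b)) x := by
  obtain rfl : P = fun x => x * (x - a) * (x - b) * (x - c) := funext hP
  exact ((((hasDerivAt_id' x).fun_mul ((hasDerivAt_id' x).sub_const a)).fun_mul
    ((hasDerivAt_id' x).sub_const b)).fun_mul ((hasDerivAt_id' x).sub_const c)).congr_deriv
    (by ring)

/-- With `r = √(ks)` and `W = 1 + r`, this is `P·((P'/2P)(W'/2W) - (W'/2W)² + (W'/2W)')`: the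
potential that the factor `√W` adds to the separated ordinary differential operator. -/
noncomputable def rFactorPotential (p p' s r : ℝ) : ℝ :=
  p' * r / (8 * s * (1 + r)) - p * r * (2 + 5 * r) / (16 * s ^ 2 * (1 + r) ^ 2)

theorem hasDerivAt_sqrt_one_add_sqrt_mul {k t : ℝ} (hk : 0 < k) (ht : 0 < t) :
    HasDerivAt (fun u => √(1 + √(k * u))) (k / (4 * √(k * t) * √(1 + √(k * t)))) t :=
  (((((hasDerivAt_id' t).const_mul k).sqrt (by positivity)).const_add 1).sqrt
    (by positivity)).congr_deriv (by ring)

/-- Taking `√|P|` instead of `√(±P)` keeps this sign-free: `(√|P|)'/√|P| = P'/(2P)` for either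
sign of `P`. -/
theorem deriv_flux_eq {P φ : ℝ → ℝ} {J : Set ℝ} {k s Q : ℝ} (hk : 0 < k) (hs : 0 < s)
    (hPs : P s ≠ 0) (hP : DifferentiableAt ℝ P s) (hJ : IsOpen J) (hsJ : s ∈ J)
    (hφ : ContDiffOn ℝ 2 φ J)
    (hode : deriv (deriv φ) s + deriv P s / (2 * P s) * deriv φ s + 1 / P s * Q * φ s = 0) :
    deriv (fun t => √|P t| / (1 + √(k * t)) * deriv (fun u => √(1 + √(k * u)) * φ u) t) s =
      √|P s| / P s * φ s / √(1 + √(k * s)) *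
        (rFactorPotential (P s) (deriv P s) s √(k * s) - Q) := by
  have hφ' : ∀ t ∈ J, HasDerivAt φ (deriv φ t) t := fun t ht =>
    ((hφ.differentiableOn two_ne_zero).differentiableAt (hJ.mem_nhds ht)).hasDerivAt
  have hφ'' : HasDerivAt (deriv φ) (deriv (deriv φ) s) s :=
    (((hφ.deriv_of_isOpen hJ (by norm_num)).differentiableOn one_ne_zero).differentiableAt
      (hJ.mem_nhds hsJ)).hasDerivAt
  have hr : HasDerivAt (fun t => √(k * t)) (k / (2 * √(k * s))) s := by
    simpa using ((hasDerivAt_id s).const_mul k).sqrt (by positivity)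
  have hSd := hasDerivAt_sqrt_one_add_sqrt_mul hk hs
  have hg : (deriv fun u => √(1 + √(k * u)) * φ u) =ᶠ[𝓝 s]
      fun t => k / (4 * √(k * t) * √(1 + √(k * t))) * φ t + √(1 + √(k * t)) * deriv φ t := by
    filter_upwards [Ioi_mem_nhds hs, hJ.mem_nhds hsJ] with t ht htJ
    exact ((hasDerivAt_sqrt_one_add_sqrt_mul hk ht).mul (hφ' t htJ)).deriv
  have hf := (((hasDerivAt_abs hPs).comp s hP.hasDerivAt).sqrt (abs_ne_zero.mpr hPs)).fun_div
    (hr.const_add 1) (by positivity)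
  have hg' := ((((hr.const_mul 4).fun_mul hSd).inv (by positivity)).const_mul k
    |>.fun_mul (hφ' s hsJ)).fun_add (hSd.fun_mul hφ'')
  rw [((hf.fun_mul hg').congr_of_eventuallyEq <| by
    filter_upwards [hg] with t ht
    rw [ht]
    rfl).deriv]
  have hφ2 : deriv (deriv φ) s = -(deriv P s / (2 * P s) * deriv φ s) - 1 / P s * Q * φ s := by
    linear_combination hode
  have hk' : k = √(k * s) ^ 2 / s := by rw [sq_sqrt (by positivity)]; field_simp
  have hsign : (SignType.sign (P s) : ℝ) = P s / √|P s| ^ 2 := by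
    rw [sq_sqrt (abs_nonneg _)]
    exact eq_div_of_mul_eq (abs_ne_zero.mpr hPs) (sign_mul_abs _)
  have hRS : 1 + √(k * s) = √(1 + √(k * s)) ^ 2 := (sq_sqrt (by positivity)).symm
  simp only [comp_apply, Pi.inv_apply]
  rw [hφ2, hsign]
  unfold rFactorPotential
  set R := √(k * s)
  set F := √|P s|
  set S := √(1 + R)
  have hR : 0 < R := by positivity
  have hF : 0 < F := by positivity
  have hS : 0 < S := by positivity
  have hF4 : F ^ 4 = P s ^ 2 := by
    rw [show F ^ 4 = (F ^ 2) ^ 2 by ring, sq_sqrt (abs_nonneg _), sq_abs]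
  have hS4 : S ^ 4 = (1 + R) ^ 2 := by rw [hRS]; ring
  rw [hRS, hk']
  field_simp
  rw [hF4, hS4, ← hRS]
  ring

theorem pd_eq_deriv_update (i : Fin 3) (f : (Fin 3 → ℝ) → ℝ) (l : Fin 3 → ℝ) :
    pd i f l = deriv (fun s => f (update l i s)) (l i) := by
  have hline : (fun t => f (l + t • Pi.single i 1)) = fun t => f (update l i (l i + t)) := by
    ext t
    congr 1
    ext j
    by_cases hj : j = i
    · subst hj; simp
    · simp [update_of_ne hj, Pi.single_eq_of_ne hj]
  rw [pd, lineDeriv, hline]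
  simpa using deriv_comp_const_add (fun s => f (update l i s)) (l i) 0

theorem pd_mul_pd_of_line {F G : (Fin 3 → ℝ) → ℝ} {f g : ℝ → ℝ} {i : Fin 3} {l : Fin 3 → ℝ}
    {A B : ℝ} (hF : ∀ᶠ s in 𝓝 (l i), F (update l i s) = A * f s)
    (hG : ∀ u, G (update l i u) = B * g u) :
    pd i (fun w => F w * pd i G w) l = A * B * deriv (fun s => f s * deriv g s) (l i) := by
  have hline : (fun s => F (update l i s) * pd i G (update l i s)) =ᶠ[𝓝 (l i)]
      fun s => A * B * (f s * deriv g s) := by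
    filter_upwards [hF] with s hs
    simp only [hs, pd_eq_deriv_update, update_self, update_idem, hG, deriv_const_mul_field]
    ring
  rw [pd_eq_deriv_update, hline.deriv_eq, deriv_const_mul_field]

theorem pd_mul_pd_eq_rFactorPotential {a b c Q : ℝ} {P : ℝ → ℝ} {W ψ F A : (Fin 3 → ℝ) → ℝ}
    {φ : Fin 3 → ℝ → ℝ} {J : Set ℝ} {l : Fin 3 → ℝ} {i : Fin 3}
    (hW : ∀ l, W l = 1 + √(l 0 * l 1 * l 2 / (a * b * c)))
    (hψ : ∀ l, ψ l = √(W l) * (φ 0 (l 0) * φ 1 (l 1) * φ 2 (l 2)))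
    (habc : 0 < a * b * c) (hl : ∀ j, 0 < l j)
    (hF : ∀ᶠ w in 𝓝 l, F w = A w * (√|P (w i)| / W w)) (hA : ∀ s, A (update l i s) = A l)
    (hPl : P (l i) ≠ 0) (hP : DifferentiableAt ℝ P (l i))
    (hJ : IsOpen J) (hlJ : l i ∈ J) (hφ : ContDiffOn ℝ 2 (φ i) J)
    (hode : deriv (deriv (φ i)) (l i) + deriv P (l i) / (2 * P (l i)) * deriv (φ i) (l i)
      + 1 / P (l i) * Q * φ i (l i) = 0) :
    pd i (fun w => F w * pd i ψ w) l = A l * (∏ j ∈ univ.erase i, φ j (l j)) *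
      (√|P (l i)| / P (l i) * φ i (l i) / √(W l) *
        (rFactorPotential (P (l i)) (deriv P (l i)) (l i) √(l 0 * l 1 * l 2 / (a * b * c))
          - Q)) := by
  set k := (∏ j ∈ univ.erase i, l j) / (a * b * c)
  have hk : 0 < k := div_pos (prod_pos fun j _ => hl j) habc
  have hkl : k * l i = l 0 * l 1 * l 2 / (a * b * c) := by
    rw [← Fin.prod_univ_three, ← mul_prod_erase univ l (mem_univ i)]
    ring
  have hWline : ∀ u, W (update l i u) = 1 + √(k * u) := fun u => by
    rw [hW, ← Fin.prod_univ_three (update l i u), prod_update_of_mem (mem_univ i),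
      sdiff_singleton_eq_erase, mul_div_assoc, mul_comm u]
  have hupdate : Tendsto (update l i) (𝓝 (l i)) (𝓝 l) :=
    (continuous_const.update i continuous_id).tendsto' (l i) l (by simp)
  have hFline : ∀ᶠ s in 𝓝 (l i), F (update l i s) = A l * (√|P s| / (1 + √(k * s))) := by
    filter_upwards [hupdate.eventually hF] with s hs
    rw [hs, hA, hWline, update_self]
  have hψline : ∀ u, ψ (update l i u) =
      (∏ j ∈ univ.erase i, φ j (l j)) * (√(1 + √(k * u)) * φ i u) := fun u => by
    rw [hψ, hWline, ← Fin.prod_univ_three fun j => φ j (update l i u j), prod_apply_update]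
    ring
  rw [pd_mul_pd_of_line hFline hψline, deriv_flux_eq hk (hl i) hPl hP hJ hlJ hφ hode, hkl,
    ← hW l]

theorem sqrt_mul_mul_div_eq {x y z p q t W Hx Hy Hz : ℝ} (hW : 0 < W)
    (hHx : Hx = (W ^ 2)⁻¹ * ((x - y) * (x - z)) / p)
    (hHy : Hy = (W ^ 2)⁻¹ * ((y - x) * (y - z)) / q)
    (hHz : Hz = (W ^ 2)⁻¹ * ((z - x) * (z - y)) / t) (hx : 0 < Hx) (hy : 0 < Hy) (hz : 0 < Hz) :
    √(Hx * Hy * Hz) / Hx = |y - z| / (√|q| * √|t|) * (√|p| / W) := by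
  have hx0 := hx.ne'
  rw [hHx] at hx0
  simp only [ne_eq, div_eq_zero_iff, mul_eq_zero, inv_eq_zero, not_or] at hx0
  obtain ⟨⟨-, hxy, hxz⟩, hp⟩ := hx0
  have hq : q ≠ 0 := by rintro rfl; simp [hHy] at hy
  have ht : t ≠ 0 := by rintro rfl; simp [hHz] at hz
  have hD : Hy * Hz / Hx = (W ^ 2)⁻¹ * ((y - z) ^ 2 * (-p / (q * t))) := by
    rw [hHx, hHy, hHz]
    field_simp [sub_ne_zero.mpr hxy, sub_ne_zero.mpr hxz]
    ring
  have hD' : Hy * Hz / Hx = (|y - z| / (√|q| * √|t|) * (√|p| / W)) ^ 2 := by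
    rw [← abs_of_pos (by positivity : 0 < Hy * Hz / Hx), hD]
    simp only [abs_mul, abs_inv, abs_pow, abs_div, abs_neg, div_pow, mul_pow, sq_abs,
      sq_sqrt (abs_nonneg _), abs_of_pos hW]
    ring
  rw [← sqrt_sq (by positivity : 0 ≤ |y - z| / (√|q| * √|t|) * (√|p| / W)), ← hD',
    show Hx * Hy * Hz = Hx ^ 2 * (Hy * Hz / Hx) by field_simp, sqrt_mul (sq_nonneg _),
    sqrt_sq hx.le]
  field_simp

theorem bocher_identity {a b c α₁ α₂ x y z r : ℝ} {p p' : ℝ → ℝ}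
    (hp : ∀ s, p s = s * (s - a) * (s - b) * (s - c))
    (hp' : ∀ s, p' s = (s - a) * (s - b) * (s - c) + s * (s - b) * (s - c)
      + s * (s - a) * (s - c) + s * (s - a) * (s - b))
    (hx : x ≠ 0) (hy : y ≠ 0) (hz : z ≠ 0) (hr : 1 + r ≠ 0)
    (hr2 : r ^ 2 * (a * b * c) = x * y * z) :
    (y - z) * (rFactorPotential (p x) (p' x) x r - (α₁ + α₂ * x + 3 / 16 * x ^ 2))
      + (z - x) * (rFactorPotential (p y) (p' y) y r - (α₁ + α₂ * y + 3 / 16 * y ^ 2))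
      + (x - y) * (rFactorPotential (p z) (p' z) z r - (α₁ + α₂ * z + 3 / 16 * z ^ 2)) = 0 := by
  simp only [rFactorPotential, hp, hp']
  field_simp
  linear_combination 24 * (x - y) * (y - z) * (x - z) * hr2

theorem separated_sum_eq {x y z p q t φx φy φz S Ex Ey Ez : ℝ} (hzy : z < y) (hyx : y < x)
    (hp : 0 < (x - y) * (x - z) / p) (hq : 0 < (y - x) * (y - z) / q)
    (ht : 0 < (z - x) * (z - y) / t) :
    |y - z| / (√|q| * √|t|) * (φy * φz) * (√|p| / p * φx / S * Ex)
      + |x - z| / (√|p| * √|t|) * (φx * φz) * (√|q| / q * φy / S * Ey)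
      + |x - y| / (√|p| * √|q|) * (φx * φy) * (√|t| / t * φz / S * Ez)
      = φx * φy * φz / (√|p| * √|q| * √|t| * S) *
        ((y - z) * Ex + (z - x) * Ey + (x - y) * Ez) := by
  have hDx : 0 < (x - y) * (x - z) := by nlinarith
  have hDy : (y - x) * (y - z) < 0 := by nlinarith
  have hDz : 0 < (z - x) * (z - y) := by nlinarith
  have hp' : 0 < p := by simpa only [div_div_cancel₀ hDx.ne'] using div_pos hDx hp
  have hq' : q < 0 := by
    simpa only [div_div_cancel₀ hDy.ne] using div_neg_of_neg_of_pos hDy hq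
  have ht' : 0 < t := by simpa only [div_div_cancel₀ hDz.ne'] using div_pos hDz ht
  have hq'' : √(-q) / q = -(√(-q) / -q) := by rw [div_neg, neg_neg]
  rw [abs_of_pos hp', abs_of_neg hq', abs_of_pos ht', abs_of_pos (sub_pos.2 hzy),
    abs_of_pos (sub_pos.2 (hzy.trans hyx)), abs_of_pos (sub_pos.2 hyx), hq'', sqrt_div_self',
    sqrt_div_self', sqrt_div_self']
  ring

theorem h_div_H2_eq {P : ℝ → ℝ} {W h : (Fin 3 → ℝ) → ℝ} {H2 : Fin 3 → (Fin 3 → ℝ) → ℝ}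
    (hH2 : ∀ i l, H2 i l = (W l ^ 2)⁻¹ * (∏ j ∈ univ.erase i, (l i - l j)) / P (l i))
    (hh : ∀ l, h l = √(H2 0 l * H2 1 l * H2 2 l)) {w : Fin 3 → ℝ} (hW : 0 < W w)
    (hpos : ∀ i, 0 < H2 i w) :
    h w / H2 0 w = |w 1 - w 2| / (√|P (w 1)| * √|P (w 2)|) * (√|P (w 0)| / W w) ∧
    h w / H2 1 w = |w 0 - w 2| / (√|P (w 0)| * √|P (w 2)|) * (√|P (w 1)| / W w) ∧
    h w / H2 2 w = |w 0 - w 1| / (√|P (w 0)| * √|P (w 1)|) * (√|P (w 2)| / W w) := by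
  simp only [hh]
  refine ⟨?_, ?_, ?_⟩
  · exact sqrt_mul_mul_div_eq hW (by rw [hH2, prod_erase_zero_fin_three])
      (by rw [hH2, prod_erase_one_fin_three]) (by rw [hH2, prod_erase_two_fin_three])
      (hpos 0) (hpos 1) (hpos 2)
  · rw [mul_comm (H2 0 w)]
    exact sqrt_mul_mul_div_eq hW (by rw [hH2, prod_erase_one_fin_three])
      (by rw [hH2, prod_erase_zero_fin_three]) (by rw [hH2, prod_erase_two_fin_three]; ring)
      (hpos 1) (hpos 0) (hpos 2)
  · rw [show H2 0 w * H2 1 w * H2 2 w = H2 2 w * H2 0 w * H2 1 w by ring]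
    exact sqrt_mul_mul_div_eq hW (by rw [hH2, prod_erase_two_fin_three])
      (by rw [hH2, prod_erase_zero_fin_three]; ring) (by rw [hH2, prod_erase_one_fin_three]; ring)
      (hpos 2) (hpos 0) (hpos 1)

theorem cyclidic_R_separability_general (a b c : ℝ) (hab : b < a) (hbc : c < b) (hc : 0 < c)
    (P : ℝ → ℝ) (hP : ∀ x, P x = x * (x - a) * (x - b) * (x - c))
    (U : Set (Fin 3 → ℝ)) (hUo : IsOpen U)
    (hord : ∀ l ∈ U, 0 < l 2 ∧ l 2 < l 1 ∧ l 1 < l 0)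
    (W : (Fin 3 → ℝ) → ℝ)
    (hW : ∀ l, W l = 1 + Real.sqrt (l 0 * l 1 * l 2 / (a * b * c)))
    (H2 : Fin 3 → (Fin 3 → ℝ) → ℝ)
    (hH2 : ∀ i l,
      H2 i l = (W l ^ 2)⁻¹ * (∏ j ∈ Finset.univ.erase i, (l i - l j)) / P (l i))
    (hpos : ∀ i : Fin 3, ∀ l ∈ U,
      0 < (∏ j ∈ Finset.univ.erase i, (l i - l j)) / P (l i))
    (h : (Fin 3 → ℝ) → ℝ) (hh : ∀ l, h l = Real.sqrt (H2 0 l * H2 1 l * H2 2 l))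
    (α1 α2 : ℝ)
    (J : Fin 3 → Set ℝ) (hJo : ∀ i, IsOpen (J i))
    (hJmem : ∀ i : Fin 3, ∀ l ∈ U, l i ∈ J i) (hJP : ∀ i, ∀ x ∈ J i, P x ≠ 0)
    (φ : Fin 3 → ℝ → ℝ) (hφ : ∀ i, ContDiffOn ℝ 2 (φ i) (J i))
    (hode : ∀ i, ∀ x ∈ J i,
      deriv (deriv (φ i)) x + deriv P x / (2 * P x) * deriv (φ i) x
        + (1 / P x) * (α1 + α2 * x + 3 / 16 * x ^ 2) * φ i x = 0)
    (ψ : (Fin 3 → ℝ) → ℝ)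
    (hψ : ∀ l, ψ l = Real.sqrt (W l) * (φ 0 (l 0) * φ 1 (l 1) * φ 2 (l 2))) :
    ∀ l ∈ U, ∑ i : Fin 3, pd i (fun w => h w / H2 i w * pd i ψ w) l = 0 := by
  have habc : 0 < a * b * c := mul_pos (mul_pos (by linarith) (by linarith)) hc
  have hWpos : ∀ w, 0 < W w := fun w => by rw [hW]; positivity
  have hcoeff : ∀ w ∈ U, _ := fun w hw => h_div_H2_eq hH2 hh (hWpos w) fun i => by
    rw [hH2, mul_div_assoc]
    exact mul_pos (by have := hWpos w; positivity) (hpos i w hw)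
  intro l hl
  obtain ⟨hz, hzy, hyx⟩ := hord l hl
  have hy : 0 < l 1 := hz.trans hzy
  have hx : 0 < l 0 := hy.trans hyx
  have hl' : ∀ j, 0 < l j := fun j => by fin_cases j <;> assumption
  have term : ∀ i (A : (Fin 3 → ℝ) → ℝ), (∀ w ∈ U, h w / H2 i w = A w * (√|P (w i)| / W w)) →
      (∀ s, A (update l i s) = A l) → pd i (fun w => h w / H2 i w * pd i ψ w) l = _ :=
    fun i _ hF hA => pd_mul_pd_eq_rFactorPotential hW hψ habc hl'
      (eventually_of_mem (hUo.mem_nhds hl) hF) hA (hJP i _ (hJmem i l hl))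
      (hasDerivAt_quartic hP _).differentiableAt (hJo i) (hJmem i l hl) (hφ i)
      (hode i _ (hJmem i l hl))
  rw [Fin.sum_univ_three, term 0 _ (fun w hw => (hcoeff w hw).1) (fun s => by simp),
    term 1 _ (fun w hw => (hcoeff w hw).2.1) (fun s => by simp),
    term 2 _ (fun w hw => (hcoeff w hw).2.2) (fun s => by simp)]
  have hG0 := hpos 0 l hl
  have hG1 := hpos 1 l hl
  have hG2 := hpos 2 l hl
  simp only [prod_erase_zero_fin_three, prod_erase_one_fin_three, prod_erase_two_fin_three]
    at hG0 hG1 hG2 ⊢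
  rw [separated_sum_eq hzy hyx hG0 hG1 hG2, bocher_identity hP
    (fun s => (hasDerivAt_quartic hP s).deriv) hx.ne' hy.ne' hz.ne'
    (by positivity) (by rw [sq_sqrt (by positivity)]; exact div_mul_cancel₀ _ habc.ne'), mul_zero]

/-- **R-separability of the flat cyclidic metric in the Laplace equation.** With
`a > b > c > 0`, `P(x) = x(x-a)(x-b)(x-c)`, `W = 1 + √(λ¹λ²λ³/(abc))`,
`Hᵢ² = W⁻²∏_{j≠i}(λⁱ-λʲ)/P(λⁱ)` and `h = √(H₁²H₂²H₃²)` on a nonempty open set `U` where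
`λ¹ > λ² > λ³ > 0` and the `Hᵢ²` are positive: every choice of `C²` solutions of
`φᵢ'' + (P'/(2P))φᵢ' + (1/P)[α₁ + α₂x + (3/16)x²]φᵢ = 0` on open intervals `Jᵢ`
containing the range of `λⁱ` (on which `P ≠ 0`) yields a solution `ψ = √W·φ₁φ₂φ₃` of
the Laplace equation `∑ᵢ ∂ᵢ((h/Hᵢ²)∂ᵢψ) = 0` on `U`. -/
theorem cyclidic_R_separability (a b c : ℝ) (hab : b < a) (hbc : c < b) (hc : 0 < c)
    (P : ℝ → ℝ) (hP : ∀ x, P x = x * (x - a) * (x - b) * (x - c))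
    (U : Set (Fin 3 → ℝ)) (hUo : IsOpen U) (hUne : U.Nonempty)
    (hord : ∀ l ∈ U, 0 < l 2 ∧ l 2 < l 1 ∧ l 1 < l 0)
    (W : (Fin 3 → ℝ) → ℝ)
    (hW : ∀ l, W l = 1 + Real.sqrt (l 0 * l 1 * l 2 / (a * b * c)))
    (H2 : Fin 3 → (Fin 3 → ℝ) → ℝ)
    (hH2 : ∀ i l,
      H2 i l = (W l ^ 2)⁻¹ * (∏ j ∈ Finset.univ.erase i, (l i - l j)) / P (l i))
    (hpos : ∀ i : Fin 3, ∀ l ∈ U,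
      0 < (∏ j ∈ Finset.univ.erase i, (l i - l j)) / P (l i))
    (h : (Fin 3 → ℝ) → ℝ) (hh : ∀ l, h l = Real.sqrt (H2 0 l * H2 1 l * H2 2 l))
    (α1 α2 : ℝ)
    (J : Fin 3 → Set ℝ) (hJo : ∀ i, IsOpen (J i)) (hJc : ∀ i, (J i).OrdConnected)
    (hJmem : ∀ i : Fin 3, ∀ l ∈ U, l i ∈ J i) (hJP : ∀ i, ∀ x ∈ J i, P x ≠ 0)
    (φ : Fin 3 → ℝ → ℝ) (hφ : ∀ i, ContDiffOn ℝ 2 (φ i) (J i))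
    (hode : ∀ i, ∀ x ∈ J i,
      deriv (deriv (φ i)) x + deriv P x / (2 * P x) * deriv (φ i) x
        + (1 / P x) * (α1 + α2 * x + 3 / 16 * x ^ 2) * φ i x = 0)
    (ψ : (Fin 3 → ℝ) → ℝ)
    (hψ : ∀ l, ψ l = Real.sqrt (W l) * (φ 0 (l 0) * φ 1 (l 1) * φ 2 (l 2))) :
    ∀ l ∈ U, ∑ i : Fin 3, pd i (fun w => h w / H2 i w * pd i ψ w) l = 0 :=
  cyclidic_R_separability_general a b c hab hbc hc P hP U hUo hord W hW H2 hH2 hpos h hh α1 α2 J hJo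
    hJmem hJP φ hφ hode ψ hψ
end
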